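/- Let (E_i, A_i, δ_i, □_i, P_i) be as in the standing setting, and assume that δ_i∘δ_{i+1} = 0, δ_i∘P_i = 0, and A_{i+1}∘A_i = 0 for all i ∈ ℤ. Then for every i and every x ∈ E_i with δ_i(x) = 0 there exists a unique element e ∈ E_i such that δ_i(e) = 0, δ_{i+1}(A_i(e)) = 0, and e − x ∈ im(δ_{i+1}); moreover this unique element is e = P_i(x). (This is the fiberwise splitting operator: the projection ker(δ_i) → ker(δ_i)/im(δ_{i+1}) restricts to a linear isomorphism from im(P_i) = ker(δ_i) ∩ ker(δ_{i+1}∘A_i) onto the quotient.) -/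

import Mathlib

/-- commutation with powers of shifted operators -/
lemma comm_pow_aux {V W : Type*} [AddCommGroup V] [Module ℂ V] [AddCommGroup W] [Module ℂ W]
    (g : V →ₗ[ℂ] V) (h : W →ₗ[ℂ] W) (ι : W →ₗ[ℂ] V)
    (hc : ∀ w, g (ι w) = ι (h w)) (μ : ℂ) (n : ℕ) (w : W) :
    ((g - μ • (1 : Module.End ℂ V)) ^ n) (ι w)
      = ι (((h - μ • (1 : Module.End ℂ W)) ^ n) w) := by
  induction n generalizing w with
  | zero => simp
  | succ n ih =>
    rw [pow_succ, pow_succ]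
    have h1 : (g - μ • (1 : Module.End ℂ V)) (ι w)
        = ι ((h - μ • (1 : Module.End ℂ W)) w) := by
      simp [hc w, map_smul]
    rw [Module.End.mul_apply, Module.End.mul_apply, h1, ih]

lemma mem_maxGen_map_aux {V W : Type*} [AddCommGroup V] [Module ℂ V] [AddCommGroup W] [Module ℂ W]
    (g : V →ₗ[ℂ] V) (h : W →ₗ[ℂ] W) (ι : W →ₗ[ℂ] V)
    (hc : ∀ w, g (ι w) = ι (h w)) (μ : ℂ) {w : W}
    (hw : w ∈ Module.End.maxGenEigenspace h μ) :
    ι w ∈ Module.End.maxGenEigenspace g μ := by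
  rw [Module.End.mem_maxGenEigenspace] at hw ⊢
  obtain ⟨n, hn⟩ := hw
  exact ⟨n, by rw [comm_pow_aux g h ι hc μ n w, hn, map_zero]⟩

lemma exists_apply_eq_of_mem_maxGen_aux {V : Type*} [AddCommGroup V] [Module ℂ V]
    (f : V →ₗ[ℂ] V) {μ : ℂ} (hμ : μ ≠ 0) {v : V}
    (hv : v ∈ Module.End.maxGenEigenspace f μ) : ∃ w, f w = v := by
  rw [Module.End.mem_maxGenEigenspace] at hv
  obtain ⟨n, hn⟩ := hv
  induction n generalizing v with
  | zero => exact ⟨0, by simpa using hn.symm⟩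
  | succ n ih =>
    rw [pow_succ, Module.End.mul_apply] at hn
    obtain ⟨w', hw'⟩ := ih hn
    refine ⟨μ⁻¹ • (v - w'), ?_⟩
    have : f w' = f v - μ • v := by
      simpa [sub_eq_iff_eq_add] using hw'
    rw [map_smul, map_sub, this]
    rw [sub_sub_cancel, smul_smul, inv_mul_cancel₀ hμ, one_smul]

lemma decomp_aux {V : Type*} [AddCommGroup V] [Module ℂ V] [FiniteDimensional ℂ V]
    (f : V →ₗ[ℂ] V) (v : V) :
    ∃ v₀ v₁, v₀ ∈ Module.End.maxGenEigenspace f 0 ∧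
      v₁ ∈ (⨆ μ, ⨆ (_ : μ ≠ (0:ℂ)), Module.End.maxGenEigenspace f μ) ∧ v = v₀ + v₁ := by
  have htop := Module.End.iSup_maxGenEigenspace_eq_top (K := ℂ) (V := V) f
  have hle : (⊤ : Submodule ℂ V) ≤ Module.End.maxGenEigenspace f 0 ⊔
      (⨆ μ, ⨆ (_ : μ ≠ (0:ℂ)), Module.End.maxGenEigenspace f μ) := by
    rw [← htop]
    refine iSup_le fun μ => ?_
    by_cases hμ : μ = 0
    · subst hμ; exact le_sup_left
    · exact le_trans (le_iSup₂ (f := fun ν (_ : ν ≠ (0:ℂ)) => Module.End.maxGenEigenspace f ν) μ hμ) le_sup_right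
  obtain ⟨v₀, h₀, v₁, h₁, hsum⟩ := Submodule.mem_sup.mp (hle trivial)
  exact ⟨v₀, v₁, h₀, h₁, hsum.symm⟩



/-- `P` is the spectral projection of `B` onto the generalized zero eigenspace, i.e. the
projection onto the generalized eigenspace for the eigenvalue `0` along the sum of the generalized
eigenspaces for the nonzero eigenvalues. -/
def IsGenZeroProj {V : Type*} [AddCommGroup V] [Module ℂ V] (B P : V →ₗ[ℂ] V) : Prop :=
  (∀ v ∈ Module.End.maxGenEigenspace B 0, P v = v) ∧
  (∀ μ : ℂ, μ ≠ 0 → ∀ v ∈ Module.End.maxGenEigenspace B μ, P v = 0)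

/-- The operator `□_{i+1} = A_i ∘ δ_{i+1} + δ_{i+2} ∘ A_{i+1} : E_{i+1} → E_{i+1}` of the standing
setting.  Here `A i : E i → E (i+1)` is the `i`-th operator of the sequence and
`δ i : E (i+1) → E i` denotes the codifferential `δ_{i+1}` of the paper. -/
noncomputable def Box (E : ℤ → Type*) [∀ i, AddCommGroup (E i)] [∀ i, Module ℂ (E i)]
    (A : ∀ i : ℤ, E i →ₗ[ℂ] E (i + 1)) (δ : ∀ i : ℤ, E (i + 1) →ₗ[ℂ] E i) (i : ℤ) :
    E (i + 1) →ₗ[ℂ] E (i + 1) :=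
  A i ∘ₗ δ i + δ (i + 1) ∘ₗ A (i + 1)

/-- In the standing setting, assume `δ_i∘δ_{i+1} = 0`, `δ_i∘P_i = 0` and
`A_{i+1}∘A_i = 0` for all `i`.  Then for every `i` and every `x ∈ E_i` with `δ_i(x) = 0` there is
a unique `e ∈ E_i` with `δ_i(e) = 0`, `δ_{i+1}(A_i(e)) = 0` and `e − x ∈ im(δ_{i+1})`; moreover
this unique element is `e = P_i(x)`.

(Indexing: the statement for all `i ∈ ℤ` is expressed by quantifying over `k ∈ ℤ`, with
`E_{k+1} = E (k+1)`, `A_{k+1} = A (k+1)`, `δ_{k+1} = δ k`, `P_{k+1} = P k`.) -/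
theorem statement5 (E : ℤ → Type*) [∀ i, AddCommGroup (E i)] [∀ i, Module ℂ (E i)]
    [∀ i, FiniteDimensional ℂ (E i)]
    (A : ∀ i : ℤ, E i →ₗ[ℂ] E (i + 1)) (δ : ∀ i : ℤ, E (i + 1) →ₗ[ℂ] E i)
    (P : ∀ i : ℤ, E (i + 1) →ₗ[ℂ] E (i + 1))
    (hP : ∀ i : ℤ, IsGenZeroProj (Box E A δ i) (P i))
    (hδδ : ∀ i : ℤ, δ i ∘ₗ δ (i + 1) = 0)
    (hδP : ∀ i : ℤ, δ i ∘ₗ P i = 0)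
    (hAA : ∀ i : ℤ, A (i + 1) ∘ₗ A i = 0) :
    ∀ k : ℤ, ∀ x : E (k + 1), δ k x = 0 →
      (∃! e : E (k + 1),
        δ k e = 0 ∧ δ (k + 1) (A (k + 1) e) = 0 ∧ e - x ∈ LinearMap.range (δ (k + 1))) ∧
      (δ k (P k x) = 0 ∧ δ (k + 1) (A (k + 1) (P k x)) = 0 ∧
        P k x - x ∈ LinearMap.range (δ (k + 1))) := by
  intro k x hx
  obtain ⟨hP0, hPn⟩ := hP k
  obtain ⟨hP0', hPn'⟩ := hP (k + 1)
  -- pointwise versions of the composite hypotheses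
  have hδδk : ∀ v, δ k (δ (k + 1) v) = 0 := fun v => by
    simpa using LinearMap.ext_iff.mp (hδδ k) v
  have hδδ1 : ∀ v, δ (k + 1) (δ (k + 1 + 1) v) = 0 := fun v => by
    simpa using LinearMap.ext_iff.mp (hδδ (k + 1)) v
  have hδPk : ∀ v, δ k (P k v) = 0 := fun v => by
    simpa using LinearMap.ext_iff.mp (hδP k) v
  have hδP1 : ∀ v, δ (k + 1) (P (k + 1) v) = 0 := fun v => by
    simpa using LinearMap.ext_iff.mp (hδP (k + 1)) v
  have hAAk : ∀ v, A (k + 1) (A k v) = 0 := fun v => by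
    simpa using LinearMap.ext_iff.mp (hAA k) v
  have hAA1 : ∀ v, A (k + 1 + 1) (A (k + 1) v) = 0 := fun v => by
    simpa using LinearMap.ext_iff.mp (hAA (k + 1)) v
  set bK := Box E A δ k with hbK
  set bK1 := Box E A δ (k + 1) with hbK1
  have hbKapp : ∀ v, bK v = A k (δ k v) + δ (k + 1) (A (k + 1) v) := fun v => rfl
  have hbK1app : ∀ v, bK1 v = A (k + 1) (δ (k + 1) v) + δ (k + 1 + 1) (A (k + 1 + 1) v) :=
    fun v => rfl
  -- intertwining relations
  have hδB : ∀ v, bK (δ (k + 1) v) = δ (k + 1) (bK1 v) := fun v => by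
    simp [hbKapp, hbK1app, map_add, hδδk, hδδ1]
  have hAB : ∀ v, bK1 (A (k + 1) v) = A (k + 1) (bK v) := fun v => by
    simp [hbKapp, hbK1app, map_add, hAAk, hAA1]
  -- the kernel of δ k is invariant under the box operator
  set K := LinearMap.ker (δ k) with hK
  have hmapsK : ∀ v ∈ K, bK v ∈ K := fun v hv => by
    have hv' : δ k v = 0 := hv
    simp [hK, LinearMap.mem_ker, hbKapp, hv', hδδk]
  set B2 := bK.restrict hmapsK with hB2
  have hB2app : ∀ w : K, bK (K.subtype w) = K.subtype (B2 w) := fun w => rfl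
  -- sums of nonzero generalized eigenspaces
  set Samb := ⨆ μ, ⨆ (_ : μ ≠ (0 : ℂ)), Module.End.maxGenEigenspace bK μ with hSamb
  set SK := ⨆ μ, ⨆ (_ : μ ≠ (0 : ℂ)), Module.End.maxGenEigenspace B2 μ with hSK
  set S1 := ⨆ μ, ⨆ (_ : μ ≠ (0 : ℂ)), Module.End.maxGenEigenspace bK1 μ with hS1
  have hmemSamb : ∀ μ : ℂ, μ ≠ 0 → Module.End.maxGenEigenspace bK μ ≤ Samb :=
    fun μ hμ => le_iSup₂ (f := fun ν (_ : ν ≠ (0 : ℂ)) => Module.End.maxGenEigenspace bK ν) μ hμ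
  have hSambker : Samb ≤ LinearMap.ker (P k) := by
    refine iSup_le fun μ => iSup_le fun hμ => fun v hv => ?_
    exact LinearMap.mem_ker.mpr (hPn μ hμ v hv)
  -- decomposition of x
  obtain ⟨x₀, x₁, hx₀, hx₁, hxsum⟩ := decomp_aux bK x
  have hPx : P k x = x₀ := by
    rw [hxsum, map_add, hP0 x₀ hx₀, LinearMap.mem_ker.mp (hSambker hx₁), add_zero]
  -- condition 1
  have cond1 : δ k (P k x) = 0 := hδPk x
  -- condition 2
  have cond2 : δ (k + 1) (A (k + 1) (P k x)) = 0 := by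
    have hA0 : A (k + 1) x₀ ∈ Module.End.maxGenEigenspace bK1 0 :=
      mem_maxGen_map_aux bK1 bK (A (k + 1)) hAB 0 hx₀
    rw [hPx]
    rw [← hP0' _ hA0]
    exact hδP1 _
  -- condition 3
  have hx₁K : x₁ ∈ K := by
    have : x₁ = x - P k x := by rw [hPx]; rw [hxsum]; abel
    show δ k x₁ = 0
    rw [this, map_sub, hx, cond1, sub_zero]
  have cond3 : P k x - x ∈ LinearMap.range (δ (k + 1)) := by
    -- decompose ⟨x₁, hx₁K⟩ inside K with respect to B2
    obtain ⟨u₀, u₁, hu₀, hu₁, husum⟩ := decomp_aux B2 ⟨x₁, hx₁K⟩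
    have hu₀amb : (u₀ : E (k + 1)) ∈ Module.End.maxGenEigenspace bK 0 :=
      mem_maxGen_map_aux bK B2 K.subtype hB2app 0 hu₀
    have hSKamb : SK ≤ Samb.comap K.subtype := by
      refine iSup_le fun μ => iSup_le fun hμ => fun w hw => ?_
      exact Submodule.mem_comap.mpr (hmemSamb μ hμ (mem_maxGen_map_aux bK B2 K.subtype hB2app μ hw))
    have hu₁amb : (u₁ : E (k + 1)) ∈ Samb := hSKamb hu₁
    have hu₀Samb : (u₀ : E (k + 1)) ∈ Samb := by
      have : (u₀ : E (k + 1)) = x₁ - (u₁ : E (k + 1)) := by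
        have := congrArg (K.subtype) husum
        simp only [map_add] at this
        simpa [eq_sub_iff_add_eq] using this.symm
      rw [this]
      exact sub_mem hx₁ hu₁amb
    have hdisj := Module.End.independent_maxGenEigenspace bK 0
    have hu₀0 : (u₀ : E (k + 1)) = 0 :=
      Submodule.disjoint_def.mp hdisj _ hu₀amb hu₀Samb
    have hx₁u₁ : (⟨x₁, hx₁K⟩ : K) = u₁ := by
      rw [husum]
      apply Subtype.ext
      simp [hu₀0]
    have hx₁SK : (⟨x₁, hx₁K⟩ : K) ∈ SK := hx₁u₁ ▸ hu₁
    have hSKrange : SK ≤ LinearMap.range B2 := by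
      refine iSup_le fun μ => iSup_le fun hμ => fun w hw => ?_
      obtain ⟨w', hw'⟩ := exists_apply_eq_of_mem_maxGen_aux B2 hμ hw
      exact ⟨w', hw'⟩
    obtain ⟨w, hw⟩ := hSKrange hx₁SK
    have hwcoe : bK (w : E (k + 1)) = x₁ := by
      have := congrArg (K.subtype) hw
      exact (hB2app w).trans this
    have hδw : δ k (w : E (k + 1)) = 0 := w.2
    have hx₁range : x₁ ∈ LinearMap.range (δ (k + 1)) := by
      refine ⟨A (k + 1) (w : E (k + 1)), ?_⟩
      rw [← hwcoe, hbKapp, hδw, map_zero, zero_add]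
    have : P k x - x = -x₁ := by rw [hPx, hxsum]; abel
    rw [this]
    exact neg_mem hx₁range
  refine ⟨⟨P k x, ⟨cond1, cond2, cond3⟩, ?_⟩, cond1, cond2, cond3⟩
  -- uniqueness
  rintro e ⟨he1, he2, he3⟩
  set v := e - P k x with hv
  have hv1 : δ k v = 0 := by rw [hv, map_sub, he1, cond1, sub_zero]
  have hv2 : δ (k + 1) (A (k + 1) v) = 0 := by
    rw [hv, map_sub, map_sub, he2, cond2, sub_zero]
  have hv3 : v ∈ LinearMap.range (δ (k + 1)) := by
    have : v = (e - x) - (P k x - x) := by rw [hv]; abel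
    rw [this]
    exact sub_mem he3 cond3
  have hvGE : v ∈ Module.End.maxGenEigenspace bK 0 := by
    rw [Module.End.mem_maxGenEigenspace]
    refine ⟨1, ?_⟩
    simp only [zero_smul, sub_zero, pow_one]
    rw [hbKapp, hv1, map_zero, hv2, zero_add]
  obtain ⟨u, hu⟩ := hv3
  obtain ⟨u₀, u₁, hu₀, hu₁, husum⟩ := decomp_aux bK1 u
  have hδu₀ : δ (k + 1) u₀ = 0 := by rw [← hP0' _ hu₀]; exact hδP1 _
  have hS1amb : S1 ≤ Samb.comap (δ (k + 1)) := by
    refine iSup_le fun μ => iSup_le fun hμ => fun w hw => ?_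
    exact Submodule.mem_comap.mpr
      (hmemSamb μ hμ (mem_maxGen_map_aux bK bK1 (δ (k + 1)) hδB μ hw))
  have hvSamb : v ∈ Samb := by
    have : v = δ (k + 1) u₁ := by
      rw [← hu, husum, map_add, hδu₀, zero_add]
    rw [this]
    exact hS1amb hu₁
  have hdisj := Module.End.independent_maxGenEigenspace bK 0
  have hv0 : v = 0 := Submodule.disjoint_def.mp hdisj _ hvGE hvSamb
  rw [hv] at hv0
  exact sub_eq_zero.mp hv0
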